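/- arXiv:1103.3865 — 12 statements merged into one kernel-verified Lean document; each statement's English description precedes it below -/
import Mathlib

section
/- In a *-ring in which every projection is central and in which the right annihilator of every element is generated by a projection (a *-abelian Rickart *-ring), every idempotent is a projection. -/
/-- In a *-abelian Rickart *-ring, every idempotent is a projection. -/
theorem idempotent_is_projection_of_starAbelian_rickart (R : Type*) [Ring R] [StarRing R]
    (hRickart : ∀ x : R, ∃ p : R, p * p = p ∧ star p = p ∧
      ∀ r : R, x * r = 0 ↔ ∃ s : R, r = p * s)
    (hStarAbelian : ∀ p : R, p * p = p → star p = p → ∀ x : R, p * x = x * p) :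
    ∀ e : R, e * e = e → star e = e := by
  intro e he
  obtain ⟨p, hpp, hps, hann⟩ := hRickart e
  have hep : e * p = 0 := (hann p).2 ⟨p, hpp.symm⟩
  have h1 : e * (1 - e) = 0 := by rw [mul_sub, mul_one, he, sub_self]
  obtain ⟨s, hs⟩ := (hann (1 - e)).1 h1
  have h2 : p * (1 - e) = 1 - e := by rw [hs, ← mul_assoc, hpp]
  have h3 : p * e = 0 := by rw [hStarAbelian p hpp hps e, hep]
  have h4 : p = 1 - e := by rw [← h2, mul_sub, mul_one, h3, sub_zero]
  have h5 : e = 1 - p := by rw [h4, sub_sub_cancel]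
  rw [h5, star_sub, star_one, hps]
end

section
/- In an abelian Rickart *-ring, the ring is *-clean if and only if it is clean. -/
/-- An abelian Rickart *-ring is *-clean iff it is clean. -/
theorem abelian_rickart_starClean_iff_clean (R : Type*) [Ring R] [StarRing R]
    (hRickart : ∀ x : R, ∃ p : R, p * p = p ∧ star p = p ∧
      ∀ r : R, x * r = 0 ↔ ∃ s : R, r = p * s)
    (hAbelian : ∀ e : R, e * e = e → ∀ x : R, e * x = x * e) :
    (∀ a : R, ∃ u p : R, IsUnit u ∧ p * p = p ∧ star p = p ∧ a = u + p) ↔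
    (∀ a : R, ∃ u e : R, IsUnit u ∧ e * e = e ∧ a = u + e) := by
  have key : ∀ e : R, e * e = e → star e = e := by
    intro e he
    obtain ⟨p, hp, hps, hann⟩ := hRickart (1 - e)
    have h1 : (1 - e) * e = 0 := by rw [sub_mul, one_mul, he, sub_self]
    obtain ⟨s, hs⟩ := (hann e).mp h1
    have h2 : (1 - e) * p = 0 := (hann p).mpr ⟨p, hp.symm⟩
    have h3 : e * p = p := by
      have h2' := h2
      rw [sub_mul, one_mul, sub_eq_zero] at h2'
      exact h2'.symm
    have h4 : p * e = e := by
      calc p * e = p * (p * s) := by rw [hs]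
        _ = (p * p) * s := by rw [mul_assoc]
        _ = p * s := by rw [hp]
        _ = e := hs.symm
    have : e = p := by rw [← h4, hAbelian p hp e, h3]
    rw [this, hps]
  constructor
  · intro h a
    obtain ⟨u, p, hu, hp, _, hap⟩ := h a
    exact ⟨u, p, hu, hp, hap⟩
  · intro h a
    obtain ⟨u, e, hu, he, hae⟩ := h a
    exact ⟨u, e, hu, he, key e he, hae⟩
end

section
/- Let R be a *-ring and p a projection in R such that the corner rings pRp and (1-p)R(1-p) (with units p and 1-p respectively) are both *-clean. Then R is *-clean. -/
/-- If p is a projection in a *-ring R such that the corners pRp and (1-p)R(1-p)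
(with units p and 1-p) are *-clean, then R is *-clean. -/
theorem starClean_of_corners (R : Type*) [Ring R] [StarRing R]
    (p : R) (hp : p * p = p) (hps : star p = p)
    (hcorner1 : ∀ a : R, p * a * p = a →
      ∃ u v q : R, p * u * p = u ∧ p * v * p = v ∧ u * v = p ∧ v * u = p ∧
        p * q * p = q ∧ q * q = q ∧ star q = q ∧ a = u + q)
    (hcorner2 : ∀ a : R, (1 - p) * a * (1 - p) = a →
      ∃ u v q : R, (1 - p) * u * (1 - p) = u ∧ (1 - p) * v * (1 - p) = v ∧
        u * v = 1 - p ∧ v * u = 1 - p ∧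
        (1 - p) * q * (1 - p) = q ∧ q * q = q ∧ star q = q ∧ a = u + q) :
    ∀ a : R, ∃ u q : R, IsUnit u ∧ q * q = q ∧ star q = q ∧ a = u + q := by
  intro x
  -- basic facts about p and 1 - p
  have hpe : p * (1 - p) = 0 := by rw [mul_sub, mul_one, hp, sub_self]
  have hep : (1 - p) * p = 0 := by rw [sub_mul, one_mul, hp, sub_self]
  have hee : (1 - p) * (1 - p) = 1 - p := by rw [mul_sub, mul_one, hep, sub_zero]
  -- generic sandwich lemmas
  have key1 : ∀ y : R, p * (p * y * p) = p * y * p := fun y => by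
    rw [← mul_assoc, ← mul_assoc, hp]
  have key2 : ∀ y : R, (p * y * p) * p = p * y * p := fun y => by
    rw [mul_assoc, hp]
  have key1e : ∀ y : R, (1 - p) * ((1 - p) * y * (1 - p)) = (1 - p) * y * (1 - p) := fun y => by
    rw [← mul_assoc, ← mul_assoc, hee]
  have key2e : ∀ y : R, ((1 - p) * y * (1 - p)) * (1 - p) = (1 - p) * y * (1 - p) := fun y => by
    rw [mul_assoc, hee]
  have key3 : ∀ y : R, p * ((1 - p) * y * (1 - p)) = 0 := fun y => by
    rw [← mul_assoc, ← mul_assoc, hpe, zero_mul, zero_mul]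
  have key4 : ∀ y : R, ((1 - p) * y * (1 - p)) * p = 0 := fun y => by
    rw [mul_assoc, hep, mul_zero]
  have key5 : ∀ y z : R, p * (p * y * z) = p * y * z := fun y z => by
    rw [← mul_assoc, ← mul_assoc, hp]
  have key6 : ∀ y : R, y * p * p = y * p := fun y => by rw [mul_assoc, hp]
  have key6e : ∀ y : R, y * (1 - p) * (1 - p) = y * (1 - p) := fun y => by
    rw [mul_assoc, hee]
  have key7 : ∀ y : R, y * (1 - p) * p = 0 := fun y => by rw [mul_assoc, hep, mul_zero]
  have key8 : ∀ y z : R, p * ((1 - p) * y * z) = 0 := fun y z => by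
    rw [← mul_assoc, ← mul_assoc, hpe, zero_mul, zero_mul]
  have key9 : ∀ y z : R, (1 - p) * ((1 - p) * y * z) = (1 - p) * y * z := fun y z => by
    rw [← mul_assoc, ← mul_assoc, hee]
  -- Peirce components
  set a : R := p * x * p with ha_def
  set b : R := p * x * (1 - p) with hb_def
  set c : R := (1 - p) * x * p with hc_def
  set d : R := (1 - p) * x * (1 - p) with hd_def
  have hpeirce : x = a + b + c + d := by rw [ha_def, hb_def, hc_def, hd_def]; noncomm_ring
  have hpb : p * b = b := key5 x (1 - p)
  have hbe : b * (1 - p) = b := key6e (p * x)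
  have hbp : b * p = 0 := key7 (p * x)
  have hpc : p * c = 0 := key8 x p
  have hcp : c * p = c := key6 ((1 - p) * x)
  have hec : (1 - p) * c = c := key9 x p
  have hed : (1 - p) * d = d := key9 x (1 - p)
  have hde : d * (1 - p) = d := key6e ((1 - p) * x)
  have hap : p * a * p = a := by
    have h1 : p * a = a := key5 x p
    rw [h1]; exact key6 (p * x)
  -- decompose a in the corner pRp
  obtain ⟨u, v, q1, hu, hv, huv, hvu, hq1, hq1q, hq1s, ha⟩ := hcorner1 a hap
  have hpu : p * u = u := by rw [← hu]; exact key1 u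
  have hup : u * p = u := by rw [← hu]; exact key2 u
  have hpv : p * v = v := by rw [← hv]; exact key1 v
  have hvp : v * p = v := by rw [← hv]; exact key2 v
  have hpq1 : p * q1 = q1 := by rw [← hq1]; exact key1 q1
  have hq1p : q1 * p = q1 := by rw [← hq1]; exact key2 q1
  -- Schur complement
  have hecvb : (1 - p) * (c * (v * b)) = c * (v * b) := by rw [← mul_assoc, hec]
  have hvbe : (v * b) * (1 - p) = v * b := by rw [mul_assoc, hbe]
  have hcvbe : (c * (v * b)) * (1 - p) = c * (v * b) := by rw [mul_assoc, hvbe]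
  have hsp : (1 - p) * (d - c * (v * b)) * (1 - p) = d - c * (v * b) := by
    calc (1 - p) * (d - c * (v * b)) * (1 - p)
        = (1 - p) * d * (1 - p) - (1 - p) * (c * (v * b)) * (1 - p) := by noncomm_ring
      _ = d - c * (v * b) := by rw [hed, hde, hecvb, hcvbe]
  obtain ⟨w, z, q2, hw, hz, hwz, hzw, hq2, hq2q, hq2s, hs⟩ := hcorner2 (d - c * (v * b)) hsp
  have hpw : p * w = 0 := by rw [← hw]; exact key3 w
  have hwp : w * p = 0 := by rw [← hw]; exact key4 w
  have hpz : p * z = 0 := by rw [← hz]; exact key3 z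
  have hzp : z * p = 0 := by rw [← hz]; exact key4 z
  have hpq2 : p * q2 = 0 := by rw [← hq2]; exact key3 q2
  have hq2p : q2 * p = 0 := by rw [← hq2]; exact key4 q2
  have hd2 : d = (w + q2) + c * (v * b) := eq_add_of_sub_eq hs
  -- the decomposition
  refine ⟨x - (q1 + q2), q1 + q2, ?_, ?_, ?_, by abel⟩
  · -- unit part: x - (q1+q2) = (1 + c*v) * ((u + w) * (1 + v*b))
    have hwv : w * v = 0 := by rw [← hpv, ← mul_assoc, hwp, zero_mul]
    have hvw : v * w = 0 := by rw [← hvp, mul_assoc, hpw, mul_zero]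
    have huvb : u * (v * b) = b := by rw [← mul_assoc, huv, hpb]
    have hcvu : c * (v * u) = c := by rw [hvu, hcp]
    have hwvb : w * (v * b) = 0 := by rw [← mul_assoc, hwv, zero_mul]
    have hcvw : c * (v * w) = 0 := by rw [hvw, mul_zero]
    have key : (1 + c * v) * ((u + w) * (1 + v * b)) =
        u + u * (v * b) + (w + w * (v * b)) +
          (c * (v * u) + c * v * (u * (v * b))) +
          (c * (v * w) + c * v * (w * (v * b))) := by noncomm_ring
    have hU : x - (q1 + q2) = (1 + c * v) * ((u + w) * (1 + v * b)) := by
      rw [key, huvb, hcvu, hwvb, hcvw]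
      simp only [mul_zero, add_zero]
      rw [mul_assoc c v b, hpeirce, ha, hd2]
      abel
    rw [hU]
    -- zero products needed for the units
    have hvc : v * c = 0 := by rw [← hvp, mul_assoc, hpc, mul_zero]
    have hbv : b * v = 0 := by rw [← hpv, ← mul_assoc, hbp, zero_mul]
    have hcvcv : c * v * (c * v) = 0 := by
      rw [mul_assoc c v (c * v), ← mul_assoc v c v, hvc, zero_mul, mul_zero]
    have hvbvb : v * b * (v * b) = 0 := by
      rw [mul_assoc v b (v * b), ← mul_assoc b v b, hbv, zero_mul, mul_zero]
    have huz : u * z = 0 := by rw [← hup, mul_assoc, hpz, mul_zero]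
    have hzu : z * u = 0 := by rw [← hpu, ← mul_assoc, hzp, zero_mul]
    have unit1 : IsUnit (1 + c * v) := by
      refine ⟨⟨1 + c * v, 1 - c * v, ?_, ?_⟩, rfl⟩
      · have h : (1 + c * v) * (1 - c * v) = 1 - c * v * (c * v) := by noncomm_ring
        rw [h, hcvcv, sub_zero]
      · have h : (1 - c * v) * (1 + c * v) = 1 - c * v * (c * v) := by noncomm_ring
        rw [h, hcvcv, sub_zero]
    have unit3 : IsUnit (1 + v * b) := by
      refine ⟨⟨1 + v * b, 1 - v * b, ?_, ?_⟩, rfl⟩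
      · have h : (1 + v * b) * (1 - v * b) = 1 - v * b * (v * b) := by noncomm_ring
        rw [h, hvbvb, sub_zero]
      · have h : (1 - v * b) * (1 + v * b) = 1 - v * b * (v * b) := by noncomm_ring
        rw [h, hvbvb, sub_zero]
    have unit2 : IsUnit (u + w) := by
      refine ⟨⟨u + w, v + z, ?_, ?_⟩, rfl⟩
      · rw [add_mul, mul_add, mul_add, huv, huz, hwv, hwz]; abel
      · rw [add_mul, mul_add, mul_add, hvu, hvw, hzu, hzw]; abel
    exact unit1.mul (unit2.mul unit3)
  · -- idempotent
    have h12 : q1 * q2 = 0 := by rw [← hq1p, mul_assoc, hpq2, mul_zero]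
    have h21 : q2 * q1 = 0 := by rw [← hpq1, ← mul_assoc, hq2p, zero_mul]
    rw [add_mul, mul_add, mul_add, hq1q, hq2q, h12, h21, add_zero, zero_add]
  · rw [star_add, hq1s, hq2s]
end

section
/- If R is a *-clean *-ring, then for every n the matrix ring Mₙ(R), with involution given by conjugate transpose (A* is the transpose of the entrywise-* matrix), is *-clean. -/
open Matrix

section Aux

variable {R : Type*} [Ring R]

private lemma isUnit_of_both {M : Type*} [Monoid M] (a b : M) (h1 : a * b = 1)
    (h2 : b * a = 1) : IsUnit a := ⟨⟨a, b, h1, h2⟩, rfl⟩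

/-- A block upper unitriangular matrix is a unit (noncommutative version). -/
private lemma isUnit_upper {m n : Type*} [Fintype m] [Fintype n] [DecidableEq m] [DecidableEq n]
    (B : Matrix m n R) : IsUnit (fromBlocks (1 : Matrix m m R) B (0 : Matrix n m R) (1 : Matrix n n R)) := by
  refine isUnit_of_both _ (fromBlocks 1 (-B) 0 1) ?_ ?_ <;>
  · simp [fromBlocks_multiply, ← fromBlocks_one]

private lemma isUnit_lower {m n : Type*} [Fintype m] [Fintype n] [DecidableEq m] [DecidableEq n]
    (C : Matrix n m R) : IsUnit (fromBlocks (1 : Matrix m m R) (0 : Matrix m n R) C (1 : Matrix n n R)) := by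
  refine isUnit_of_both _ (fromBlocks 1 0 (-C) 1) ?_ ?_ <;>
  · simp [fromBlocks_multiply, ← fromBlocks_one]

private lemma isUnit_blockDiag {m n : Type*} [Fintype m] [Fintype n] [DecidableEq m]
    [DecidableEq n] {A : Matrix m m R} {D : Matrix n n R} (hA : IsUnit A) (hD : IsUnit D) :
    IsUnit (fromBlocks A 0 0 D) := by
  obtain ⟨uA, rfl⟩ := hA
  obtain ⟨uD, rfl⟩ := hD
  refine isUnit_of_both _ (fromBlocks uA⁻¹.val 0 0 uD⁻¹.val) ?_ ?_ <;>
  · rw [fromBlocks_multiply]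
    simp only [Matrix.mul_zero, Matrix.zero_mul, add_zero, zero_add, Units.mul_inv,
      Units.inv_mul]
    exact fromBlocks_one

private lemma isUnit_submatrix {ι κ : Type} [Fintype ι] [Fintype κ] [DecidableEq ι]
    [DecidableEq κ] (e : ι ≃ κ) {M : Matrix κ κ R} (hM : IsUnit M) :
    IsUnit (M.submatrix e e) := by
  obtain ⟨u, rfl⟩ := hM
  refine isUnit_of_both _ (u⁻¹.val.submatrix e e) ?_ ?_ <;>
  · rw [Matrix.submatrix_mul_equiv]
    simp only [Units.mul_inv, Units.inv_mul]
    exact Matrix.submatrix_one_equiv e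

variable [StarRing R]

private def Good (R : Type*) [Ring R] [StarRing R]
    (ι : Type) [Fintype ι] [DecidableEq ι] : Prop :=
  ∀ A : Matrix ι ι R,
      ∃ d : ι → R, (∀ i, d i * d i = d i ∧ star (d i) = d i) ∧
        IsUnit (A - Matrix.diagonal d)

private lemma good_equiv {ι κ : Type} [Fintype ι] [Fintype κ] [DecidableEq ι] [DecidableEq κ]
    (e : ι ≃ κ) (hι : Good R ι) : Good R κ := by
  intro A
  obtain ⟨d, hd, hu⟩ := hι (A.submatrix e e)
  refine ⟨d ∘ e.symm, fun i => hd _, ?_⟩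
  have heq : A - Matrix.diagonal (d ∘ e.symm)
      = (A.submatrix e e - Matrix.diagonal d).submatrix e.symm e.symm := by
    ext i j
    simp only [Matrix.sub_apply, Matrix.submatrix_apply, Equiv.apply_symm_apply,
      Matrix.diagonal_apply, Function.comp]
    congr 1
    by_cases hij : i = j
    · simp [hij]
    · rw [if_neg hij, if_neg (fun hc => hij (e.symm.injective hc))]
  rw [heq]
  exact isUnit_submatrix e.symm hu

private lemma good_zero : Good R (Fin 0) := by
  intro A
  refine ⟨fun _ => 0, fun i => i.elim0, ?_⟩
  have : A - Matrix.diagonal (fun _ => (0 : R)) = 1 := by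
    ext i j; exact i.elim0
  rw [this]
  exact isUnit_one

private lemma good_one (h : ∀ a : R, ∃ u p : R, IsUnit u ∧ p * p = p ∧ star p = p ∧ a = u + p) :
    Good R (Fin 1) := by
  intro A
  obtain ⟨u, p, hu, hp, hsp, hup⟩ := h (A 0 0)
  obtain ⟨v, hv⟩ := hu
  refine ⟨fun _ => p, fun i => ⟨hp, hsp⟩, ?_⟩
  refine isUnit_of_both _ (Matrix.of fun _ _ => ((v⁻¹ : Rˣ) : R)) ?_ ?_ <;>
  · ext i j
    fin_cases i <;> fin_cases j <;>
      simp [Matrix.mul_apply, Fin.sum_univ_succ, hup, ← hv, Matrix.one_apply]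

private lemma good_sum {α β : Type} [Fintype α] [Fintype β] [DecidableEq α] [DecidableEq β]
    (hα : Good R α) (hβ : Good R β) : Good R (α ⊕ β) := by
  intro A
  obtain ⟨f, hf, hVf⟩ := hβ A.toBlocks₂₂
  obtain ⟨V, hV⟩ := hVf
  obtain ⟨g, hg, hU⟩ :=
    hα (A.toBlocks₁₁ - A.toBlocks₁₂ * V⁻¹.val * A.toBlocks₂₁)
  refine ⟨Sum.elim g f, by rintro (i | i); exacts [hg i, hf i], ?_⟩
  have hA : A - Matrix.diagonal (Sum.elim g f)
      = Matrix.fromBlocks (A.toBlocks₁₁ - Matrix.diagonal g) A.toBlocks₁₂ A.toBlocks₂₁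
          V.val := by
    rw [← Matrix.fromBlocks_diagonal, hV]
    nth_rewrite 1 [← Matrix.fromBlocks_toBlocks A]
    ext (i | i) (j | j) <;>
      simp [Matrix.fromBlocks, Matrix.toBlocks₁₁, Matrix.toBlocks₁₂, Matrix.toBlocks₂₁,
        Matrix.toBlocks₂₂]
  have hfac : Matrix.fromBlocks (A.toBlocks₁₁ - Matrix.diagonal g) A.toBlocks₁₂ A.toBlocks₂₁
          V.val
      = Matrix.fromBlocks 1 (A.toBlocks₁₂ * V⁻¹.val) 0 1 *
        (Matrix.fromBlocks
            (A.toBlocks₁₁ - A.toBlocks₁₂ * V⁻¹.val * A.toBlocks₂₁ -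
              Matrix.diagonal g) 0 0 V.val *
          Matrix.fromBlocks 1 0 (V⁻¹.val * A.toBlocks₂₁) 1) := by
    rw [Matrix.fromBlocks_multiply, Matrix.fromBlocks_multiply]
    simp only [Matrix.mul_zero, Matrix.zero_mul, Matrix.mul_one, Matrix.one_mul, add_zero,
      zero_add, ← Matrix.mul_assoc, Units.mul_inv_cancel_right, Units.inv_mul_cancel_right,
      Units.mul_inv, Units.inv_mul]
    have h12 : A.toBlocks₁₂ * V⁻¹.val * V.val = A.toBlocks₁₂ := by
      rw [Matrix.mul_assoc, Units.inv_mul, Matrix.mul_one]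
    have h11 : A.toBlocks₁₁ - A.toBlocks₁₂ * V⁻¹.val * A.toBlocks₂₁ - Matrix.diagonal g
        + A.toBlocks₁₂ * V⁻¹.val * A.toBlocks₂₁ = A.toBlocks₁₁ - Matrix.diagonal g := by
      abel
    rw [h12, h11]
  rw [hA, hfac]
  exact (isUnit_upper _).mul ((isUnit_blockDiag hU V.isUnit).mul (isUnit_lower _))

/-- key induction: every matrix is a unit plus a diagonal matrix of "good" elements. -/
private lemma key (R : Type*) [Ring R] [StarRing R]
    (h : ∀ a : R, ∃ u p : R, IsUnit u ∧ p * p = p ∧ star p = p ∧ a = u + p) :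
    ∀ (ι : Type) [Fintype ι] [DecidableEq ι] (A : Matrix ι ι R),
      ∃ d : ι → R, (∀ i, d i * d i = d i ∧ star (d i) = d i) ∧
        IsUnit (A - Matrix.diagonal d) := by
  intro ι _ _
  have hfin : ∀ n : ℕ, Good R (Fin n) := by
    intro n
    induction n with
    | zero => exact good_zero
    | succ n ih =>
        exact good_equiv (finSumFinEquiv.trans (finCongr (Nat.add_comm 1 n)))
          (good_sum (good_one h) ih)
  exact good_equiv (Fintype.equivFin ι).symm (hfin _)

end Aux

/-- If R is a *-clean *-ring, then the matrix ring Mₙ(R) with the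
conjugate-transpose involution is *-clean. -/
theorem matrix_starClean (R : Type*) [Ring R] [StarRing R] (n : ℕ)
    (h : ∀ a : R, ∃ u p : R, IsUnit u ∧ p * p = p ∧ star p = p ∧ a = u + p) :
    ∀ A : Matrix (Fin n) (Fin n) R, ∃ U P : Matrix (Fin n) (Fin n) R,
      IsUnit U ∧ P * P = P ∧ P.conjTranspose = P ∧ A = U + P := by
  intro A
  obtain ⟨d, hd, hu⟩ := key R h (Fin n) A
  refine ⟨A - Matrix.diagonal d, Matrix.diagonal d, hu, ?_, ?_, by abel⟩
  · rw [Matrix.diagonal_mul_diagonal]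
    exact congrArg _ (funext fun i => (hd i).1)
  · rw [Matrix.diagonal_conjTranspose]
    exact congrArg _ (funext fun i => (hd i).2)
end

section
/- If R is a *-regular abelian *-ring (regular with proper involution and all idempotents central), then every element a of R can be written as a = u + p where u is a unit, p is a projection, and aR ∩ pR = 0. -/
/-- In a *-regular abelian *-ring, every element a can be written as a = u + p
with u a unit and p a projection such that aR ∩ pR = 0. -/
theorem starRegular_abelian_starClean_decomposition (R : Type*) [Ring R] [StarRing R]
    (hreg : ∀ a : R, ∃ x : R, a = a * x * a)
    (hproper : ∀ x : R, star x * x = 0 → x = 0)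
    (habelian : ∀ e : R, e * e = e → ∀ x : R, e * x = x * e) :
    ∀ a : R, ∃ u p : R, IsUnit u ∧ p * p = p ∧ star p = p ∧ a = u + p ∧
      ∀ x : R, (∃ r : R, x = a * r) → (∃ s : R, x = p * s) → x = 0 := by
  intro a
  obtain ⟨x, hx⟩ := hreg a
  have hx' : a * (x * a) = a := by rw [← mul_assoc, ← hx]
  set y := x * a * x with hy
  have hay : a * (y * a) = a := by
    simp only [hy, mul_assoc]
    rw [hx', hx']
  set e := a * y with he_def
  set f := y * a with hf_def
  have he : e * e = e := by
    calc e * e = a * (y * a) * y := by simp only [he_def, mul_assoc]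
      _ = e := by rw [hay]
  have hf : f * f = f := by
    calc f * f = y * (a * (y * a)) := by simp only [hf_def, mul_assoc]
      _ = f := by rw [hay]
  have ecent := habelian e he
  have fcent := habelian f hf
  have hea : e * a = a := by rw [he_def, mul_assoc]; exact hay
  have hae : a * e = a := by rw [← ecent a]; exact hea
  have haf : a * f = a := by rw [hf_def, ← mul_assoc, mul_assoc]; exact hay
  have hfa : f * a = a := by rw [fcent]; exact haf
  have h1 : f * e = e := by
    calc f * e = f * a * y := by simp only [he_def, mul_assoc]
      _ = e := by rw [hfa]
  have h2 : f * e = f := by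
    calc f * e = y * (a * e) := by simp only [hf_def, mul_assoc]
      _ = f := by rw [hae]
  have hef : e = f := h1.symm.trans h2
  -- the unit and its inverse
  set u := a - 1 + e with hu_def
  set v := y * e - 1 + e with hv_def
  have hav : a * v = e := by
    rw [hv_def, mul_add, mul_sub, mul_one, hae, ← mul_assoc, ← he_def, he]
    abel
  have hev : e * v = y * e := by
    have h3 : e * (y * e) = y * e := by
      rw [← mul_assoc, ecent y, mul_assoc, he]
    rw [hv_def, mul_add, mul_sub, mul_one, he, h3]
    abel
  have hva : v * a = e := by
    have h4 : y * e * a = e := by rw [mul_assoc, hea, ← hf_def, ← hef]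
    rw [hv_def, add_mul, sub_mul, one_mul, hea, h4]
    abel
  have hve : v * e = y * e := by
    have h5 : y * e * e = y * e := by rw [mul_assoc, he]
    rw [hv_def, add_mul, sub_mul, one_mul, he, h5]
    abel
  have huv : u * v = 1 := by
    rw [hu_def, add_mul, sub_mul, one_mul, hav, hev, hv_def]
    abel
  have hvu : v * u = 1 := by
    rw [hu_def, mul_add, mul_sub, mul_one, hva, hve, hv_def]
    abel
  have hunit : IsUnit u := ⟨⟨u, v, huv, hvu⟩, rfl⟩
  -- e is self-adjoint
  have hse : star e * star e = star e := by rw [← star_mul, he]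
  have secent := habelian (star e) hse
  have hc1 : star e * e = e * star e := secent e
  have hc2 : star e * (e * star e) = e * star e := by
    rw [← mul_assoc, hc1, mul_assoc, hse]
  have hc3 : (e * star e) * e = e * star e := by
    rw [mul_assoc, hc1, ← mul_assoc, he]
  have hc4 : (e * star e) * (e * star e) = e * star e := by
    rw [← mul_assoc, hc3, mul_assoc, hse]
  have hz1 : e - e * star e = 0 := by
    apply hproper
    have hst : star (e - e * star e) = star e - e * star e := by
      simp [star_sub, star_mul, star_star]
    rw [hst, sub_mul, mul_sub, mul_sub, hc1, hc2, hc3, hc4]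
    abel
  have hz2 : star e - e * star e = 0 := by
    apply hproper
    have hst : star (star e - e * star e) = e - e * star e := by
      simp [star_sub, star_mul, star_star]
    rw [hst, hz1, zero_mul]
  have hstar_e : star e = e := by
    have e1 : e = e * star e := sub_eq_zero.mp hz1
    have e2 : star e = e * star e := sub_eq_zero.mp hz2
    rw [e2, ← e1]
  refine ⟨u, 1 - e, hunit, ?_, ?_, ?_, ?_⟩
  · rw [sub_mul, one_mul, mul_sub, mul_one, he]
    abel
  · rw [star_sub, star_one, hstar_e]
  · rw [hu_def]; abel
  · rintro w ⟨r, hr⟩ ⟨s, hs⟩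
    have hw1 : e * w = w := by rw [hr, ← mul_assoc, hea]
    have hw2 : e * w = 0 := by
      have : e * (1 - e) = 0 := by rw [mul_sub, mul_one, he, sub_self]
      rw [hs, ← mul_assoc, this, zero_mul]
    rw [← hw1, hw2]
end

section
/- Let R be a *-subring of a *-ring S (with the same 1 and compatible involution) such that S is *-clean and every projection of S lies in R. Then R is almost *-clean: every element of R is the sum of a projection and an element that is neither a left nor a right zero-divisor in R. -/
/-- If a *-ring R embeds (as a *-subring with the same 1) in a *-clean *-ring S
containing no projections outside R, then R is almost *-clean. -/
theorem almost_starClean_of_embedding (S : Type*) [Ring S] [StarRing S]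
    (R : Subring S) (hstar : ∀ r ∈ R, star r ∈ R)
    (hS : ∀ a : S, ∃ u p : S, IsUnit u ∧ p * p = p ∧ star p = p ∧ a = u + p)
    (hproj : ∀ p : S, p * p = p → star p = p → p ∈ R) :
    ∀ a ∈ R, ∃ x p : S, x ∈ R ∧ p ∈ R ∧ p * p = p ∧ star p = p ∧ a = x + p ∧
      (∀ r ∈ R, x * r = 0 → r = 0) ∧ (∀ r ∈ R, r * x = 0 → r = 0) := by
  intro a ha
  obtain ⟨u, p, hu, hpp, hps, hupd⟩ := hS a
  have hpR : p ∈ R := hproj p hpp hps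
  have huR : u ∈ R := by
    have : a - p ∈ R := R.sub_mem ha hpR
    simpa [hupd] using this
  obtain ⟨v, rfl⟩ := hu
  refine ⟨v, p, huR, hpR, hpp, hps, hupd, ?_, ?_⟩
  · intro r _ h
    have := congrArg (fun z => ((v⁻¹ : Sˣ) : S) * z) h
    simpa [← mul_assoc] using this
  · intro r _ h
    have := congrArg (fun z => z * ((v⁻¹ : Sˣ) : S)) h
    simpa [mul_assoc] using this
end

section
/- Let R be a *-subring of a *-ring S (with the same 1 and compatible involution) such that S is *-clean and every projection of S lies in R. If R is von Neumann regular, then R is *-clean. -/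
/-- If a von Neumann regular *-ring R embeds (as a *-subring with the same 1)
in a *-clean *-ring S containing no projections outside R, then R is *-clean. -/
theorem starClean_of_embedding_regular (S : Type*) [Ring S] [StarRing S]
    (R : Subring S) (hstar : ∀ r ∈ R, star r ∈ R)
    (hS : ∀ a : S, ∃ u p : S, IsUnit u ∧ p * p = p ∧ star p = p ∧ a = u + p)
    (hproj : ∀ p : S, p * p = p → star p = p → p ∈ R)
    (hreg : ∀ a ∈ R, ∃ b ∈ R, a = a * b * a) :
    ∀ a ∈ R, ∃ u v p : S, u ∈ R ∧ v ∈ R ∧ u * v = 1 ∧ v * u = 1 ∧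
      p ∈ R ∧ p * p = p ∧ star p = p ∧ a = u + p := by
  intro a ha
  obtain ⟨u, p, hu, hpp, hps, hap⟩ := hS a
  have hpR : p ∈ R := hproj p hpp hps
  have huR : u ∈ R := by
    have : a - p ∈ R := R.sub_mem ha hpR
    simpa [hap] using this
  obtain ⟨b, hbR, hb⟩ := hreg u huR
  obtain ⟨w, hw⟩ := hu
  have hub : u * b = 1 := by
    have h1 : u * b * u * (↑w⁻¹ : S) = u * (↑w⁻¹ : S) := by rw [← hb]
    have h2 : u * (↑w⁻¹ : S) = 1 := by rw [← hw]; exact w.mul_inv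
    rw [mul_assoc, h2, mul_one] at h1
    exact h1
  have hbu : b * u = 1 := by
    have h1 : (↑w⁻¹ : S) * (u * b * u) = (↑w⁻¹ : S) * u := by rw [← hb]
    have h2 : (↑w⁻¹ : S) * u = 1 := by rw [← hw]; exact w.inv_mul
    rw [← mul_assoc, ← mul_assoc, h2, one_mul] at h1
    exact h1
  exact ⟨u, b, p, huR, hbR, hub, hbu, hpR, hpp, hps, hap⟩
end

section
/- A von Neumann regular ring that is both left morphic and right Rickart is unit-regular. -/
/-- A von Neumann regular ring that is left morphic and right Rickart is unit-regular. -/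
theorem unitRegular_of_regular_leftMorphic_rightRickart (R : Type*) [Ring R]
    (hreg : ∀ a : R, ∃ x : R, a = a * x * a)
    (hmorphic : ∀ x : R, Nonempty
      ((R ⧸ Submodule.span R ({x} : Set R)) ≃ₗ[R]
        LinearMap.ker (LinearMap.toSpanSingleton R R x)))
    (hRickart : ∀ x : R, ∃ e : R, e * e = e ∧
      ∀ r : R, x * r = 0 ↔ ∃ s : R, r = e * s) :
    ∀ a : R, ∃ u : Rˣ, a = a * u * a := by
  intro a
  obtain ⟨x, hx⟩ := hreg a
  obtain ⟨φ⟩ := hmorphic a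
  set I := Submodule.span R ({a} : Set R) with hI
  let ψ : R →ₗ[R] R :=
    (LinearMap.ker (LinearMap.toSpanSingleton R R a)).subtype ∘ₗ φ.toLinearMap ∘ₗ I.mkQ
  -- basic facts about ψ
  have hψa : ∀ r : R, ψ r * a = 0 := by
    intro r
    have h := (φ (I.mkQ r)).2
    rw [LinearMap.mem_ker, LinearMap.toSpanSingleton_apply, smul_eq_mul] at h
    have hrfl : ψ r = ((φ (I.mkQ r) : R)) := rfl
    rw [hrfl]
    exact h
  have hψmul : ∀ r : R, ψ r = r * ψ 1 := by
    intro r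
    have := ψ.map_smul r 1
    simpa [smul_eq_mul] using this
  have hmem : ∀ c : R, c * a ∈ I := by
    intro c
    exact Submodule.mem_span_singleton.mpr ⟨c, by rw [smul_eq_mul]⟩
  have hψ0 : ∀ c : R, ψ (c * a) = 0 := by
    intro c
    have h0 : I.mkQ (c * a) = 0 := (Submodule.Quotient.mk_eq_zero I).mpr (hmem c)
    simp [ψ, h0]
  have hψinj : ∀ r : R, ψ r = 0 → ∃ c : R, r = c * a := by
    intro r hr
    have h1 : φ (I.mkQ r) = 0 := Subtype.ext (by simpa [ψ] using hr)
    have h2 : I.mkQ r = 0 := by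
      apply φ.injective
      simpa using h1
    obtain ⟨c, hc⟩ := Submodule.mem_span_singleton.mp ((Submodule.Quotient.mk_eq_zero I).mp h2)
    exact ⟨c, by rw [← hc, smul_eq_mul]⟩
  have hψsurj : ∀ t : R, t * a = 0 → ∃ r : R, ψ r = t := by
    intro t ht
    obtain ⟨q, hq⟩ := φ.surjective
      ⟨t, by simpa [LinearMap.mem_ker, LinearMap.toSpanSingleton_apply, smul_eq_mul] using ht⟩
    obtain ⟨r, hr⟩ := I.mkQ_surjective q
    refine ⟨r, ?_⟩
    simp [ψ, hr, hq]
  -- the candidate unit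
  set u := x * a * x + ψ 1 with hu
  have hru : ∀ r : R, r * u = r * (x * a * x) + ψ r := by
    intro r
    rw [hu, mul_add, ← hψmul r]
  -- key multiplicative identities
  have hxax_a : ∀ r : R, r * (x * a * x) * a = r * (x * a) := by
    intro r
    have h1 : r * (x * a * x) * a = r * x * (a * x * a) := by noncomm_ring
    rw [h1, ← hx]
    noncomm_ring
  -- injectivity of right multiplication by u
  have hinj : ∀ r : R, r * u = 0 → r = 0 := by
    intro r hr
    have h1 : r * (x * a * x) * a + ψ r * a = 0 := by
      rw [← add_mul, ← hru r, hr, zero_mul]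
    rw [hxax_a r, hψa r, add_zero] at h1
    -- h1 : r * (x * a) = 0
    have h2 : ψ r = 0 := by
      have h3 : r * (x * a * x) = 0 := by
        have : r * (x * a * x) = r * (x * a) * x := by noncomm_ring
        rw [this, h1, zero_mul]
      have := hru r
      rw [hr, h3, zero_add] at this
      exact this.symm
    obtain ⟨c, hc⟩ := hψinj r h2
    have h4 : r * (x * a) = r := by
      rw [hc]
      have : c * a * (x * a) = c * (a * x * a) := by noncomm_ring
      rw [this, ← hx]
    rw [h4] at h1
    exact h1
  -- construct a left inverse v of u
  have hfa : (1 - a * x) * a = 0 := by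
    have : (1 - a * x) * a = a - a * x * a := by noncomm_ring
    rw [this, ← hx, sub_self]
  obtain ⟨r₂, hr₂⟩ := hψsurj (1 - a * x) hfa
  set v := a + r₂ - r₂ * (x * a) with hv
  have hvu : v * u = 1 := by
    have hψv : ψ v = 1 - a * x := by
      have e1 : ψ v = ψ a + ψ r₂ - ψ (r₂ * (x * a)) := by
        rw [hv, map_sub, map_add]
      have e2 : ψ a = 0 := by
        have := hψ0 1
        rwa [one_mul] at this
      have e3 : ψ (r₂ * (x * a)) = 0 := by
        have : r₂ * (x * a) = r₂ * x * a := by noncomm_ring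
        rw [this]
        exact hψ0 (r₂ * x)
      rw [e1, e2, e3, zero_add, sub_zero, hr₂]
    have hvxax : v * (x * a * x) = a * x := by
      rw [hv]
      have expand : (a + r₂ - r₂ * (x * a)) * (x * a * x)
          = a * (x * a * x) + r₂ * (x * a * x) - r₂ * (x * a * (x * a * x)) := by
        noncomm_ring
      rw [expand]
      have e4 : a * (x * a * x) = a * x := by
        have : a * (x * a * x) = a * x * a * x := by noncomm_ring
        rw [this, ← hx]
      have e5 : x * a * (x * a * x) = x * a * x := by
        have h' : x * a * (x * a * x) = x * (a * x * a) * x := by noncomm_ring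
        rw [h', ← hx]
      rw [e4, e5, add_sub_cancel_right]
    rw [hru v, hvxax, hψv]
    noncomm_ring
  have huv : u * v = 1 := by
    have h0 : (u * v - 1) * u = 0 := by
      have : (u * v - 1) * u = u * (v * u) - u := by noncomm_ring
      rw [this, hvu, mul_one, sub_self]
    have := hinj _ h0
    rwa [sub_eq_zero] at this
  refine ⟨⟨u, v, huv, hvu⟩, ?_⟩
  show a = a * u * a
  have hau : a * u = a * x := by
    rw [hru a]
    have e2 : ψ a = 0 := by
      have := hψ0 1
      rwa [one_mul] at this
    have e4 : a * (x * a * x) = a * x := by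
      have : a * (x * a * x) = a * x * a * x := by noncomm_ring
      rw [this, ← hx]
    rw [e2, e4, add_zero]
  rw [hau, ← hx]
end

section
/- If R is a *-regular ring, then for every x ∈ R there exists a projection p with xR = pR. -/
/-- In a *-regular ring, for every x there is a projection p with xR = pR. -/
theorem starRegular_principal_right_ideal_projection (R : Type*) [Ring R] [StarRing R]
    (hreg : ∀ a : R, ∃ x : R, a = a * x * a)
    (hproper : ∀ x : R, star x * x = 0 → x = 0) :
    ∀ x : R, ∃ p : R, p * p = p ∧ star p = p ∧
      ∀ y : R, (∃ r : R, y = x * r) ↔ (∃ s : R, y = p * s) := by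
  intro x
  set a : R := star x * x with ha
  obtain ⟨y, hy⟩ := hreg a
  clear_value a
  have ha' : star a = a := by rw [ha, star_mul, star_star]
  have hy' : a = a * star y * a := by
    calc a = star a := ha'.symm
    _ = star (a * y * a) := by rw [← hy]
    _ = a * star y * a := by rw [star_mul, star_mul, ha', mul_assoc]
  set z : R := y * a * star y with hz
  clear_value z
  have hzs : star z = z := by
    rw [hz, star_mul, star_mul, star_star, ha', mul_assoc]
  have haza : a * z * a = a := by
    calc a * z * a = (a * y * a) * (star y * a) := by rw [hz]; noncomm_ring
    _ = a * (star y * a) := by rw [← hy]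
    _ = a := by rw [← mul_assoc, ← hy']
  have hassoc : x * z * a = x * (z * a) := by rw [mul_assoc]
  have h1 : a * z * star x * x = a := by
    rw [mul_assoc (a * z) (star x) x, ← ha, haza]
  have h2 : star x * (x * z * a) = a := by
    rw [hassoc, ← mul_assoc, ← ha, ← mul_assoc, haza]
  have t1 : (a * z * star x) * (x * z * a) = a := by
    rw [hassoc, ← mul_assoc, h1, ← mul_assoc, haza]
  have key : x * z * a = x := by
    have hst : star (x * z * a - x) = a * z * star x - star x := by
      rw [star_sub, star_mul, star_mul, ha', hzs, mul_assoc]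
    have h0 : star (x * z * a - x) * (x * z * a - x) = 0 := by
      rw [hst, sub_mul, mul_sub, mul_sub, t1, h1, h2, ← ha]
      abel
    have := hproper _ h0
    rwa [sub_eq_zero] at this
  have px : (x * z * star x) * x = x := by
    rw [mul_assoc (x * z) (star x) x, ← ha, key]
  refine ⟨x * z * star x, ?_, ?_, ?_⟩
  · calc (x * z * star x) * (x * z * star x)
        = ((x * z * star x) * x) * (z * star x) := by noncomm_ring
    _ = x * (z * star x) := by rw [px]
    _ = x * z * star x := by rw [mul_assoc]
  · rw [star_mul, star_mul, star_star, hzs, ← mul_assoc]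
  · intro w
    constructor
    · rintro ⟨r, rfl⟩
      exact ⟨x * r, by rw [← mul_assoc, px]⟩
    · rintro ⟨s, rfl⟩
      exact ⟨z * star x * s, by noncomm_ring⟩
end

section
/- If R is a right nonsingular ring whose maximal right ring of quotients Q is von Neumann regular and x ∈ Q satisfies x* x = 0 for an involution on Q extending a proper involution on R, then x = 0; equivalently: if the involution on R is proper and extends to Q, then the extended involution on Q is proper. -/
/-- If a proper involution on a right nonsingular ring R extends to its maximal
right ring of quotients Q (a von Neumann regular ring in which R is dense),
then the extended involution on Q is proper. -/
theorem extended_involution_proper (Q : Type*) [Ring Q] [StarRing Q]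
    (R : Subring Q) (hstar : ∀ r ∈ R, star r ∈ R)
    (hreg : ∀ a : Q, ∃ b : Q, a = a * b * a)
    (hproperR : ∀ r ∈ R, star r * r = 0 → r = 0)
    (hdense : ∀ x : Q, (∀ r ∈ R, x * r ∈ R → x * r = 0) → x = 0) :
    ∀ x : Q, star x * x = 0 → x = 0 := by
  intro x hx
  apply hdense
  intro r hr hxr
  apply hproperR _ hxr
  have : star (x * r) * (x * r) = star r * (star x * x) * r := by
    simp [star_mul, mul_assoc]
  rw [this, hx, mul_zero, zero_mul]
end

section
/- Let R be a *-ring in which every element a can be written as a = u + p with u a unit and p a projection such that aR ∩ pR = 0. Then R is unit-regular. -/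
/-- If in a *-ring every element a decomposes as a = u + p with u a unit and p
a projection with aR ∩ pR = 0, then the ring is unit-regular. -/
theorem unitRegular_of_starClean_decomposition (R : Type*) [Ring R] [StarRing R]
    (h : ∀ a : R, ∃ u p : R, IsUnit u ∧ p * p = p ∧ star p = p ∧ a = u + p ∧
      ∀ x : R, (∃ r : R, x = a * r) → (∃ s : R, x = p * s) → x = 0) :
    ∀ a : R, ∃ u : Rˣ, a = a * u * a := by
  intro a
  obtain ⟨u, p, hu, hp2, hps, heq, hint⟩ := h a
  obtain ⟨U, rfl⟩ := hu
  refine ⟨U⁻¹, ?_⟩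
  have hx : a * ↑U⁻¹ * p = 0 := by
    apply hint
    · exact ⟨↑U⁻¹ * p, by rw [mul_assoc]⟩
    · refine ⟨1 + ↑U⁻¹ * p, ?_⟩
      calc a * ↑U⁻¹ * p = (↑U + p) * ↑U⁻¹ * p := by rw [← heq]
        _ = ↑U * ↑U⁻¹ * p + p * ↑U⁻¹ * p := by rw [add_mul, add_mul]
        _ = p * (1 + ↑U⁻¹ * p) := by
            rw [U.mul_inv, one_mul, mul_add, mul_one, mul_assoc]
  calc a = a * 1 := (mul_one a).symm
    _ = a * (↑U⁻¹ * ↑U) := by rw [U.inv_mul]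
    _ = a * ↑U⁻¹ * ↑U + 0 := by rw [mul_assoc, add_zero]
    _ = a * ↑U⁻¹ * ↑U + a * ↑U⁻¹ * p := by rw [hx]
    _ = a * ↑U⁻¹ * (↑U + p) := by rw [mul_add]
    _ = a * ↑U⁻¹ * a := by rw [← heq]
end

section
/- Let R be a *-ring and p₁, …, pₙ pairwise orthogonal projections with p₁ + ⋯ + pₙ = 1 such that each corner ring pᵢRpᵢ (with unit pᵢ) is *-clean. Then R is *-clean. -/
section Aux

variable {R : Type*} [Ring R]

private lemma lift_mul {x y z : R} (h : x * y = z) : ∀ t : R, x * (y * t) = z * t := by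
  intro t; rw [← mul_assoc, h]

private lemma cornerL {e x : R} (he : e * e = e) (hx : e * x * e = x) : e * x = x := by
  conv_lhs => rw [← hx]
  rw [← mul_assoc, ← mul_assoc, he]
  exact hx

private lemma cornerR {e x : R} (he : e * e = e) (hx : e * x * e = x) : x * e = x := by
  conv_lhs => rw [← hx]
  rw [mul_assoc, he]
  exact hx

private lemma killL {e f x : R} (hfe : f * e = 0) (hx : e * x * e = x) : f * x = 0 := by
  conv_lhs => rw [← hx]
  rw [← mul_assoc, ← mul_assoc, hfe, zero_mul, zero_mul]

private lemma killR {e f x : R} (hef : e * f = 0) (hx : e * x * e = x) : x * f = 0 := by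
  conv_lhs => rw [← hx]
  rw [mul_assoc, hef, mul_zero]

private lemma kill2 {x m y : R} (h1 : x * m = 0) (h2 : m * y = y) : x * y = 0 := by
  rw [← h2, ← mul_assoc, h1, zero_mul]

variable [StarRing R]

/-- corner `eRe` is *-clean (with explicit inverses). -/
private def CC (e : R) : Prop :=
  ∀ a : R, e * a * e = a →
    ∃ u v q : R, e * u * e = u ∧ e * v * e = v ∧
      u * v = e ∧ v * u = e ∧
      e * q * e = q ∧ q * q = q ∧ star q = q ∧ a = u + q

private lemma cc_zero : CC (0 : R) := by
  intro a ha
  refine ⟨0, 0, 0, by simp, by simp, by simp, by simp, by simp, by simp, by simp, ?_⟩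
  simp at ha
  simp [← ha]

private lemma cc_pair {e f : R} (he : e * e = e) (hf : f * f = f)
    (hef : e * f = 0) (hfe : f * e = 0) (hCe : CC e) (hCf : CC f) : CC (e + f) := by
  intro a ha
  -- Peirce components
  set a11 := e * a * e with ha11
  set b := e * a * f with hb
  set c := f * a * e with hc
  set a22 := f * a * f with ha22
  obtain ⟨u1, v1, q1, hu1, hv1, huv1, hvu1, hq1, hq1i, hq1s, hd1⟩ :=
    hCe a11 (by rw [ha11, ← mul_assoc, ← mul_assoc, he, mul_assoc, mul_assoc, he, ← mul_assoc])
  -- absorption facts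
  have eu1 := cornerL he hu1; have u1e := cornerR he hu1
  have ev1 := cornerL he hv1; have v1e := cornerR he hv1
  have eq1 := cornerL he hq1; have q1e := cornerR he hq1
  have fu1 := killL hfe hu1; have u1f := killR hef hu1
  have fv1 := killL hfe hv1; have v1f := killR hef hv1
  have fq1 := killL hfe hq1; have q1f := killR hef hq1
  -- b and c facts
  have eb : e * b = b := by rw [hb, ← mul_assoc, ← mul_assoc, he]
  have bf : b * f = b := by rw [hb, mul_assoc, mul_assoc, hf, ← mul_assoc]
  have fb : f * b = 0 := by rw [hb, ← mul_assoc, ← mul_assoc, hfe, zero_mul, zero_mul]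
  have be : b * e = 0 := by rw [hb, mul_assoc, hfe, mul_zero]
  have fc : f * c = c := by rw [hc, ← mul_assoc, ← mul_assoc, hf]
  have ce : c * e = c := by rw [hc, mul_assoc, mul_assoc, he, ← mul_assoc]
  have ec : e * c = 0 := by rw [hc, ← mul_assoc, ← mul_assoc, hef, zero_mul, zero_mul]
  have cf : c * f = 0 := by rw [hc, mul_assoc, hef, mul_zero]
  -- Schur complement
  have hdcorner : f * (a22 - c * (v1 * b)) * f = a22 - c * (v1 * b) := by
    rw [mul_sub, sub_mul]
    congr 1
    · rw [ha22, ← mul_assoc, ← mul_assoc, hf, mul_assoc, mul_assoc, hf, ← mul_assoc]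
    · rw [← mul_assoc, fc, mul_assoc c, mul_assoc v1, bf]
  obtain ⟨u2, v2, q2, hu2, hv2, huv2, hvu2, hq2, hq2i, hq2s, hd2⟩ :=
    hCf (a22 - c * (v1 * b)) hdcorner
  have fu2 := cornerL hf hu2; have u2f := cornerR hf hu2
  have fv2 := cornerL hf hv2; have v2f := cornerR hf hv2
  have fq2 := cornerL hf hq2; have q2f := cornerR hf hq2
  have eu2 := killL hef hu2; have u2e := killR hfe hu2
  have ev2 := killL hef hv2; have v2e := killR hfe hv2
  have eq2 := killL hef hq2; have q2e := killR hfe hq2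
  -- cross kills
  have ku1u2 : u1 * u2 = 0 := kill2 u1f fu2
  have ku1v2 : u1 * v2 = 0 := kill2 u1f fv2
  have ku1q2 : u1 * q2 = 0 := kill2 u1f fq2
  have ku1c : u1 * c = 0 := kill2 u1f fc
  have kv1u2 : v1 * u2 = 0 := kill2 v1f fu2
  have kv1v2 : v1 * v2 = 0 := kill2 v1f fv2
  have kv1q2 : v1 * q2 = 0 := kill2 v1f fq2
  have kv1c : v1 * c = 0 := kill2 v1f fc
  have kq1u2 : q1 * u2 = 0 := kill2 q1f fu2
  have kq1v2 : q1 * v2 = 0 := kill2 q1f fv2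
  have kq1q2 : q1 * q2 = 0 := kill2 q1f fq2
  have kq1c : q1 * c = 0 := kill2 q1f fc
  have kcu2 : c * u2 = 0 := kill2 cf fu2
  have kcv2 : c * v2 = 0 := kill2 cf fv2
  have kcq2 : c * q2 = 0 := kill2 cf fq2
  have kcc : c * c = 0 := kill2 cf fc
  have ku2u1 : u2 * u1 = 0 := kill2 u2e eu1
  have ku2v1 : u2 * v1 = 0 := kill2 u2e ev1
  have ku2q1 : u2 * q1 = 0 := kill2 u2e eq1
  have ku2b : u2 * b = 0 := kill2 u2e eb
  have kv2u1 : v2 * u1 = 0 := kill2 v2e eu1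
  have kv2v1 : v2 * v1 = 0 := kill2 v2e ev1
  have kv2q1 : v2 * q1 = 0 := kill2 v2e eq1
  have kv2b : v2 * b = 0 := kill2 v2e eb
  have kq2u1 : q2 * u1 = 0 := kill2 q2e eu1
  have kq2v1 : q2 * v1 = 0 := kill2 q2e ev1
  have kq2q1 : q2 * q1 = 0 := kill2 q2e eq1
  have kq2b : q2 * b = 0 := kill2 q2e eb
  have kbu1 : b * u1 = 0 := kill2 be eu1
  have kbv1 : b * v1 = 0 := kill2 be ev1
  have kbq1 : b * q1 = 0 := kill2 be eq1
  have kbb : b * b = 0 := kill2 be eb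
  -- witnesses
  refine ⟨u1 + b + c + u2 + c * (v1 * b),
    (v1 - v1 * (b * v2) + v2) * (e + f - c * v1), q1 + q2, ?_, ?_, ?_, ?_, ?_, ?_, ?_, ?_⟩
  · simp only [mul_add, add_mul, sub_mul, mul_sub, neg_mul, mul_neg, mul_assoc,
      lift_mul he, lift_mul hf, lift_mul hef, lift_mul hfe, lift_mul eu1, lift_mul u1e, lift_mul ev1, lift_mul v1e, lift_mul eq1, lift_mul q1e, lift_mul fu1, lift_mul u1f, lift_mul fv1, lift_mul v1f, lift_mul fq1, lift_mul q1f, lift_mul eb, lift_mul bf, lift_mul fb, lift_mul be, lift_mul fc, lift_mul ce, lift_mul ec, lift_mul cf, lift_mul fu2, lift_mul u2f, lift_mul fv2, lift_mul v2f, lift_mul fq2, lift_mul q2f, lift_mul eu2, lift_mul u2e, lift_mul ev2, lift_mul v2e, lift_mul eq2, lift_mul q2e, lift_mul huv1, lift_mul hvu1, lift_mul huv2, lift_mul hvu2, lift_mul ku1u2, lift_mul ku1v2, lift_mul ku1q2, lift_mul ku1c, lift_mul kv1u2, lift_mul kv1v2, lift_mul kv1q2, lift_mul kv1c, lift_mul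 kq1u2, lift_mul kq1v2, lift_mul kq1q2, lift_mul kq1c, lift_mul kcu2, lift_mul kcv2, lift_mul kcq2, lift_mul kcc, lift_mul ku2u1, lift_mul ku2v1, lift_mul ku2q1, lift_mul ku2b, lift_mul kv2u1, lift_mul kv2v1, lift_mul kv2q1, lift_mul kv2b, lift_mul kq2u1, lift_mul kq2v1, lift_mul kq2q1, lift_mul kq2b, lift_mul kbu1, lift_mul kbv1, lift_mul kbq1, lift_mul kbb, lift_mul hq1i, lift_mul hq2i,
      he, hf, hef, hfe, eu1, u1e, ev1, v1e, eq1, q1e, fu1, u1f, fv1, v1f, fq1, q1f, eb, bf, fb, be, fc, ce, ec, cf, fu2, u2f, fv2, v2f, fq2, q2f, eu2, u2e, ev2, v2e, eq2, q2e, huv1, hvu1, huv2, hvu2, ku1u2, ku1v2, ku1q2, ku1c, kv1u2, kv1v2, kv1q2, kv1c, kq1u2, kq1v2, kq1q2, kq1c, kcu2, kcv2, kcq2, kcc, ku2u1, ku2v1, ku2q1, ku2b, kv2u1, kv2v1, kv2q1, kv2b, kq2u1, kq2v1, kq2q1, kq2b, kbu1, kbv1, kbq1, kbb, hq1i, hq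2i,
      zero_mul, mul_zero, add_zero, zero_add, sub_zero, zero_sub, neg_zero]
    try abel
  · simp only [mul_add, add_mul, sub_mul, mul_sub, neg_mul, mul_neg, mul_assoc,
      lift_mul he, lift_mul hf, lift_mul hef, lift_mul hfe, lift_mul eu1, lift_mul u1e, lift_mul ev1, lift_mul v1e, lift_mul eq1, lift_mul q1e, lift_mul fu1, lift_mul u1f, lift_mul fv1, lift_mul v1f, lift_mul fq1, lift_mul q1f, lift_mul eb, lift_mul bf, lift_mul fb, lift_mul be, lift_mul fc, lift_mul ce, lift_mul ec, lift_mul cf, lift_mul fu2, lift_mul u2f, lift_mul fv2, lift_mul v2f, lift_mul fq2, lift_mul q2f, lift_mul eu2, lift_mul u2e, lift_mul ev2, lift_mul v2e, lift_mul eq2, lift_mul q2e, lift_mul huv1, lift_mul hvu1, lift_mul huv2, lift_mul hvu2, lift_mul ku1u2, lift_mul ku1v2, lift_mul ku1q2, lift_mul ku1c, lift_mul kv1u2, lift_mul kv1v2, lift_mul kv1q2, lift_mul kv1c, lift_mul kq1u2, lift_mul kq1v2, lift_mul kq1q2, lift_mul kq1c, lift_mul kcu2, lift_mul kcv2, lift_mul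 kcq2, lift_mul kcc, lift_mul ku2u1, lift_mul ku2v1, lift_mul ku2q1, lift_mul ku2b, lift_mul kv2u1, lift_mul kv2v1, lift_mul kv2q1, lift_mul kv2b, lift_mul kq2u1, lift_mul kq2v1, lift_mul kq2q1, lift_mul kq2b, lift_mul kbu1, lift_mul kbv1, lift_mul kbq1, lift_mul kbb, lift_mul hq1i, lift_mul hq2i,
      he, hf, hef, hfe, eu1, u1e, ev1, v1e, eq1, q1e, fu1, u1f, fv1, v1f, fq1, q1f, eb, bf, fb, be, fc, ce, ec, cf, fu2, u2f, fv2, v2f, fq2, q2f, eu2, u2e, ev2, v2e, eq2, q2e, huv1, hvu1, huv2, hvu2, ku1u2, ku1v2, ku1q2, ku1c, kv1u2, kv1v2, kv1q2, kv1c, kq1u2, kq1v2, kq1q2, kq1c, kcu2, kcv2, kcq2, kcc, ku2u1, ku2v1, ku2q1, ku2b, kv2u1, kv2v1, kv2q1, kv2b, kq2u1, kq2v1, kq2q1, kq2b, kbu1, kbv1, kbq1, kbb, hq1i, hq2i,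
      zero_mul, mul_zero, add_zero, zero_add, sub_zero, zero_sub, neg_zero]
    try abel
  · simp only [mul_add, add_mul, sub_mul, mul_sub, neg_mul, mul_neg, mul_assoc,
      lift_mul he, lift_mul hf, lift_mul hef, lift_mul hfe, lift_mul eu1, lift_mul u1e, lift_mul ev1, lift_mul v1e, lift_mul eq1, lift_mul q1e, lift_mul fu1, lift_mul u1f, lift_mul fv1, lift_mul v1f, lift_mul fq1, lift_mul q1f, lift_mul eb, lift_mul bf, lift_mul fb, lift_mul be, lift_mul fc, lift_mul ce, lift_mul ec, lift_mul cf, lift_mul fu2, lift_mul u2f, lift_mul fv2, lift_mul v2f, lift_mul fq2, lift_mul q2f, lift_mul eu2, lift_mul u2e, lift_mul ev2, lift_mul v2e, lift_mul eq2, lift_mul q2e, lift_mul huv1, lift_mul hvu1, lift_mul huv2, lift_mul hvu2, lift_mul ku1u2, lift_mul ku1v2, lift_mul ku1q2, lift_mul ku1c, lift_mul kv1u2, lift_mul kv1v2, lift_mul kv1q2, lift_mul kv1c, lift_mul kq1u2, lift_mul kq1v2, lift_mul kq1q2, lift_mul kq1c, lift_mul kcu2, lift_mul kcv2, lift_mul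 kcq2, lift_mul kcc, lift_mul ku2u1, lift_mul ku2v1, lift_mul ku2q1, lift_mul ku2b, lift_mul kv2u1, lift_mul kv2v1, lift_mul kv2q1, lift_mul kv2b, lift_mul kq2u1, lift_mul kq2v1, lift_mul kq2q1, lift_mul kq2b, lift_mul kbu1, lift_mul kbv1, lift_mul kbq1, lift_mul kbb, lift_mul hq1i, lift_mul hq2i,
      he, hf, hef, hfe, eu1, u1e, ev1, v1e, eq1, q1e, fu1, u1f, fv1, v1f, fq1, q1f, eb, bf, fb, be, fc, ce, ec, cf, fu2, u2f, fv2, v2f, fq2, q2f, eu2, u2e, ev2, v2e, eq2, q2e, huv1, hvu1, huv2, hvu2, ku1u2, ku1v2, ku1q2, ku1c, kv1u2, kv1v2, kv1q2, kv1c, kq1u2, kq1v2, kq1q2, kq1c, kcu2, kcv2, kcq2, kcc, ku2u1, ku2v1, ku2q1, ku2b, kv2u1, kv2v1, kv2q1, kv2b, kq2u1, kq2v1, kq2q1, kq2b, kbu1, kbv1, kbq1, kbb, hq1i, hq2i,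
      zero_mul, mul_zero, add_zero, zero_add, sub_zero, zero_sub, neg_zero]
    try abel
  · simp only [mul_add, add_mul, sub_mul, mul_sub, neg_mul, mul_neg, mul_assoc,
      lift_mul he, lift_mul hf, lift_mul hef, lift_mul hfe, lift_mul eu1, lift_mul u1e, lift_mul ev1, lift_mul v1e, lift_mul eq1, lift_mul q1e, lift_mul fu1, lift_mul u1f, lift_mul fv1, lift_mul v1f, lift_mul fq1, lift_mul q1f, lift_mul eb, lift_mul bf, lift_mul fb, lift_mul be, lift_mul fc, lift_mul ce, lift_mul ec, lift_mul cf, lift_mul fu2, lift_mul u2f, lift_mul fv2, lift_mul v2f, lift_mul fq2, lift_mul q2f, lift_mul eu2, lift_mul u2e, lift_mul ev2, lift_mul v2e, lift_mul eq2, lift_mul q2e, lift_mul huv1, lift_mul hvu1, lift_mul huv2, lift_mul hvu2, lift_mul ku1u2, lift_mul ku1v2, lift_mul ku1q2, lift_mul ku1c, lift_mul kv1u2, lift_mul kv1v2, lift_mul kv1q2, lift_mul kv1c, lift_mul kq1u2, lift_mul kq1v2, lift_mul kq1q2, lift_mul kq1c, lift_mul kcu2, lift_mul kcv2, lift_mul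 kcq2, lift_mul kcc, lift_mul ku2u1, lift_mul ku2v1, lift_mul ku2q1, lift_mul ku2b, lift_mul kv2u1, lift_mul kv2v1, lift_mul kv2q1, lift_mul kv2b, lift_mul kq2u1, lift_mul kq2v1, lift_mul kq2q1, lift_mul kq2b, lift_mul kbu1, lift_mul kbv1, lift_mul kbq1, lift_mul kbb, lift_mul hq1i, lift_mul hq2i,
      he, hf, hef, hfe, eu1, u1e, ev1, v1e, eq1, q1e, fu1, u1f, fv1, v1f, fq1, q1f, eb, bf, fb, be, fc, ce, ec, cf, fu2, u2f, fv2, v2f, fq2, q2f, eu2, u2e, ev2, v2e, eq2, q2e, huv1, hvu1, huv2, hvu2, ku1u2, ku1v2, ku1q2, ku1c, kv1u2, kv1v2, kv1q2, kv1c, kq1u2, kq1v2, kq1q2, kq1c, kcu2, kcv2, kcq2, kcc, ku2u1, ku2v1, ku2q1, ku2b, kv2u1, kv2v1, kv2q1, kv2b, kq2u1, kq2v1, kq2q1, kq2b, kbu1, kbv1, kbq1, kbb, hq1i, hq2i,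
      zero_mul, mul_zero, add_zero, zero_add, sub_zero, zero_sub, neg_zero]
    try abel
  · simp only [mul_add, add_mul, sub_mul, mul_sub, neg_mul, mul_neg, mul_assoc,
      lift_mul he, lift_mul hf, lift_mul hef, lift_mul hfe, lift_mul eu1, lift_mul u1e, lift_mul ev1, lift_mul v1e, lift_mul eq1, lift_mul q1e, lift_mul fu1, lift_mul u1f, lift_mul fv1, lift_mul v1f, lift_mul fq1, lift_mul q1f, lift_mul eb, lift_mul bf, lift_mul fb, lift_mul be, lift_mul fc, lift_mul ce, lift_mul ec, lift_mul cf, lift_mul fu2, lift_mul u2f, lift_mul fv2, lift_mul v2f, lift_mul fq2, lift_mul q2f, lift_mul eu2, lift_mul u2e, lift_mul ev2, lift_mul v2e, lift_mul eq2, lift_mul q2e, lift_mul huv1, lift_mul hvu1, lift_mul huv2, lift_mul hvu2, lift_mul ku1u2, lift_mul ku1v2, lift_mul ku1q2, lift_mul ku1c, lift_mul kv1u2, lift_mul kv1v2, lift_mul kv1q2, lift_mul kv1c, lift_mul kq1u2, lift_mul kq1v2, lift_mul kq1q2, lift_mul kq1c, lift_mul kcu2, lift_mul kcv2, lift_mul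 kcq2, lift_mul kcc, lift_mul ku2u1, lift_mul ku2v1, lift_mul ku2q1, lift_mul ku2b, lift_mul kv2u1, lift_mul kv2v1, lift_mul kv2q1, lift_mul kv2b, lift_mul kq2u1, lift_mul kq2v1, lift_mul kq2q1, lift_mul kq2b, lift_mul kbu1, lift_mul kbv1, lift_mul kbq1, lift_mul kbb, lift_mul hq1i, lift_mul hq2i,
      he, hf, hef, hfe, eu1, u1e, ev1, v1e, eq1, q1e, fu1, u1f, fv1, v1f, fq1, q1f, eb, bf, fb, be, fc, ce, ec, cf, fu2, u2f, fv2, v2f, fq2, q2f, eu2, u2e, ev2, v2e, eq2, q2e, huv1, hvu1, huv2, hvu2, ku1u2, ku1v2, ku1q2, ku1c, kv1u2, kv1v2, kv1q2, kv1c, kq1u2, kq1v2, kq1q2, kq1c, kcu2, kcv2, kcq2, kcc, ku2u1, ku2v1, ku2q1, ku2b, kv2u1, kv2v1, kv2q1, kv2b, kq2u1, kq2v1, kq2q1, kq2b, kbu1, kbv1, kbq1, kbb, hq1i, hq2i,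
      zero_mul, mul_zero, add_zero, zero_add, sub_zero, zero_sub, neg_zero]
    try abel
  · simp only [mul_add, add_mul, sub_mul, mul_sub, neg_mul, mul_neg, mul_assoc,
      lift_mul he, lift_mul hf, lift_mul hef, lift_mul hfe, lift_mul eu1, lift_mul u1e, lift_mul ev1, lift_mul v1e, lift_mul eq1, lift_mul q1e, lift_mul fu1, lift_mul u1f, lift_mul fv1, lift_mul v1f, lift_mul fq1, lift_mul q1f, lift_mul eb, lift_mul bf, lift_mul fb, lift_mul be, lift_mul fc, lift_mul ce, lift_mul ec, lift_mul cf, lift_mul fu2, lift_mul u2f, lift_mul fv2, lift_mul v2f, lift_mul fq2, lift_mul q2f, lift_mul eu2, lift_mul u2e, lift_mul ev2, lift_mul v2e, lift_mul eq2, lift_mul q2e, lift_mul huv1, lift_mul hvu1, lift_mul huv2, lift_mul hvu2, lift_mul ku1u2, lift_mul ku1v2, lift_mul ku1q2, lift_mul ku1c, lift_mul kv1u2, lift_mul kv1v2, lift_mul kv1q2, lift_mul kv1c, lift_mul kq1u2, lift_mul kq1v2, lift_mul kq1q2, lift_mul kq1c, lift_mul kcu2, lift_mul kcv2, lift_mul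 kcq2, lift_mul kcc, lift_mul ku2u1, lift_mul ku2v1, lift_mul ku2q1, lift_mul ku2b, lift_mul kv2u1, lift_mul kv2v1, lift_mul kv2q1, lift_mul kv2b, lift_mul kq2u1, lift_mul kq2v1, lift_mul kq2q1, lift_mul kq2b, lift_mul kbu1, lift_mul kbv1, lift_mul kbq1, lift_mul kbb, lift_mul hq1i, lift_mul hq2i,
      he, hf, hef, hfe, eu1, u1e, ev1, v1e, eq1, q1e, fu1, u1f, fv1, v1f, fq1, q1f, eb, bf, fb, be, fc, ce, ec, cf, fu2, u2f, fv2, v2f, fq2, q2f, eu2, u2e, ev2, v2e, eq2, q2e, huv1, hvu1, huv2, hvu2, ku1u2, ku1v2, ku1q2, ku1c, kv1u2, kv1v2, kv1q2, kv1c, kq1u2, kq1v2, kq1q2, kq1c, kcu2, kcv2, kcq2, kcc, ku2u1, ku2v1, ku2q1, ku2b, kv2u1, kv2v1, kv2q1, kv2b, kq2u1, kq2v1, kq2q1, kq2b, kbu1, kbv1, kbq1, kbb, hq1i, hq2i,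
      zero_mul, mul_zero, add_zero, zero_add, sub_zero, zero_sub, neg_zero]
    try abel
  · simp only [star_add, hq1s, hq2s]
  · have ha22' : a22 = u2 + q2 + c * (v1 * b) := by
      rw [← hd2]; abel
    calc a = (e + f) * a * (e + f) := ha.symm
      _ = e * a * e + e * a * f + (f * a * e + f * a * f) := by noncomm_ring
      _ = a11 + b + (c + a22) := by rw [← ha11, ← hb, ← hc, ← ha22]
      _ = (u1 + q1) + b + (c + (u2 + q2 + c * (v1 * b))) := by rw [← hd1, ← ha22']
      _ = u1 + b + c + u2 + c * (v1 * b) + (q1 + q2) := by abel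

end Aux

/-- If p₁, …, pₙ are pairwise orthogonal projections summing to 1 in a *-ring R
and each corner pᵢRpᵢ is *-clean, then R is *-clean. -/
theorem starClean_of_orthogonal_corners (R : Type*) [Ring R] [StarRing R]
    (n : ℕ) (p : Fin n → R)
    (hproj : ∀ i, p i * p i = p i ∧ star (p i) = p i)
    (horth : ∀ i j, i ≠ j → p i * p j = 0)
    (hsum : ∑ i, p i = 1)
    (hcorner : ∀ i, ∀ a : R, p i * a * p i = a →
      ∃ u v q : R, p i * u * p i = u ∧ p i * v * p i = v ∧
        u * v = p i ∧ v * u = p i ∧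
        p i * q * p i = q ∧ q * q = q ∧ star q = q ∧ a = u + q) :
    ∀ a : R, ∃ u q : R, IsUnit u ∧ q * q = q ∧ star q = q ∧ a = u + q := by
  have key : ∀ s : Finset (Fin n), CC (∑ i ∈ s, p i) := by
    intro s
    induction s using Finset.induction_on with
    | empty => simpa using (cc_zero : CC (0 : R))
    | @insert i s hi ih =>
      rw [Finset.sum_insert hi]
      have hef : p i * ∑ j ∈ s, p j = 0 := by
        rw [Finset.mul_sum]
        exact Finset.sum_eq_zero fun j hj => horth i j (by rintro rfl; exact hi hj)
      have hfe : (∑ j ∈ s, p j) * p i = 0 := by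
        rw [Finset.sum_mul]
        exact Finset.sum_eq_zero fun j hj => horth j i (by rintro rfl; exact hi hj)
      have hff : (∑ j ∈ s, p j) * (∑ j ∈ s, p j) = ∑ j ∈ s, p j := by
        rw [Finset.sum_mul]
        refine Finset.sum_congr rfl fun j hj => ?_
        rw [Finset.mul_sum]
        rw [Finset.sum_eq_single j (fun k hk hne => horth j k (Ne.symm hne))
          (fun h => absurd hj h)]
        exact (hproj j).1
      exact cc_pair (hproj i).1 hff hef hfe (fun a ha => hcorner i a ha) ih
  have h1 : CC (1 : R) := by
    have := key Finset.univ
    rwa [hsum] at this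
  intro a
  obtain ⟨u, v, q, _, _, huv, hvu, _, hqi, hqs, hd⟩ := h1 a (by rw [one_mul, mul_one])
  exact ⟨u, q, ⟨⟨u, v, huv, hvu⟩, rfl⟩, hqi, hqs, hd⟩
end
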